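/- arXiv:1210.1292 — 5 statements merged into one kernel-verified Lean document; each statement's English description precedes it below -/
import Mathlib

section
/- The absolute value of the determinant of the 2n×2n tridiagonal matrix T_{2n} with zero diagonal and off-diagonals a_1, ..., a_{2n-1} equals the square of the product a_1 · a_3 · a_5 ⋯ a_{2n-1} of the odd-indexed entries; equivalently, det T_{2n} = (−1)^n · ∏_{k=1}^n a_{2k-1}^2. -/
/-!
Since T has zero diagonal, the last row and the last column of T_{m+2} have a single nonzero
entry, a_{m+1}, in position m. Expanding the determinant along that row and then along that
column leaves the leading block T_m, so det T_{m+2} = -a_{m+1}² det T_m, and starting from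
det T_0 = 1 this gives det T_{2n} = (-1)^n a_1² a_3² ⋯ a_{2n-1}².
-/

/-- The m×m symmetric tridiagonal matrix with zero main diagonal and
off-diagonal entries `(T)_{k,k+1} = (T)_{k+1,k} = a k` (1-indexed `a`). -/
def tridiag (a : ℕ → ℝ) (m : ℕ) : Matrix (Fin m) (Fin m) ℝ :=
  Matrix.of fun i j =>
    if (i : ℕ) + 1 = (j : ℕ) then a ((i : ℕ) + 1)
    else if (j : ℕ) + 1 = (i : ℕ) then a ((j : ℕ) + 1)
    else 0

open Matrix Fin

theorem Matrix.det_eq_neg_mul_det_of_last_row_col {R : Type*} [CommRing R] {m : ℕ}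
    (M : Matrix (Fin (m + 2)) (Fin (m + 2)) R)
    (hrow : ∀ j, j ≠ (last m).castSucc → M (last (m + 1)) j = 0)
    (hcol : ∀ i, i ≠ (last m).castSucc → M i (last (m + 1)) = 0) :
    M.det = -(M (last (m + 1)) (last m).castSucc * M (last m).castSucc (last (m + 1))) *
      (M.submatrix (castSucc ∘ castSucc) (castSucc ∘ castSucc)).det := by
  set N := M.submatrix (last (m + 1)).succAbove (last m).castSucc.succAbove
  have hN : N.det = M (last m).castSucc (last (m + 1)) *
      (M.submatrix (castSucc ∘ castSucc) (castSucc ∘ castSucc)).det := by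
    rw [det_succ_column N (last m), Finset.sum_eq_single (last m)]
    · have hsub : N.submatrix (last m).succAbove (last m).succAbove =
          M.submatrix (castSucc ∘ castSucc) (castSucc ∘ castSucc) := by
        ext i j
        simp [N, succAbove_castSucc_of_lt _ _ (castSucc_lt_last j)]
      rw [hsub]
      simp [N]
    · intro i _ hi
      simp [N, hcol _ ((castSucc_injective _).ne hi)]
    · simp
  rw [det_succ_row M (last (m + 1)), Finset.sum_eq_single (last m).castSucc, hN]
  · simp only [val_last, val_castSucc, odd_add_one_self, Odd.neg_one_pow, neg_mul, one_mul]
    ring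
  · intro j _ hj
    simp [hrow j hj]
  · simp

section Tridiag

variable (a : ℕ → ℝ)

theorem tridiag_apply_of_succ_eq {m : ℕ} {i j : Fin m} (h : (i : ℕ) + 1 = j) :
    tridiag a m i j = a (i + 1) := by
  simp [tridiag, h]

theorem tridiag_apply_of_eq_succ {m : ℕ} {i j : Fin m} (h : (j : ℕ) + 1 = i) :
    tridiag a m i j = a (j + 1) := by
  simp [tridiag, h, show (i : ℕ) + 1 ≠ j by omega]

theorem tridiag_apply_of_not_adj {m : ℕ} {i j : Fin m} (h₁ : (i : ℕ) + 1 ≠ j)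
    (h₂ : (j : ℕ) + 1 ≠ i) :
    tridiag a m i j = 0 := by
  simp [tridiag, h₁, h₂]

theorem tridiag_submatrix_castSucc (m : ℕ) :
    (tridiag a (m + 1)).submatrix castSucc castSucc = tridiag a m := by
  ext i j
  simp [tridiag]

theorem det_tridiag_add_two (m : ℕ) :
    (tridiag a (m + 2)).det = -a (m + 1) ^ 2 * (tridiag a m).det := by
  have hrow : ∀ j, j ≠ (last m).castSucc → tridiag a (m + 2) (last (m + 1)) j = 0 := by
    intro j hj
    rw [Ne, Fin.ext_iff, val_castSucc, val_last] at hj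
    exact tridiag_apply_of_not_adj a (by rw [val_last]; omega) (by rw [val_last]; omega)
  have hcol : ∀ i, i ≠ (last m).castSucc → tridiag a (m + 2) i (last (m + 1)) = 0 := by
    intro i hi
    rw [Ne, Fin.ext_iff, val_castSucc, val_last] at hi
    exact tridiag_apply_of_not_adj a (by rw [val_last]; omega) (by rw [val_last]; omega)
  rw [det_eq_neg_mul_det_of_last_row_col _ hrow hcol, ← submatrix_submatrix,
    tridiag_submatrix_castSucc, tridiag_submatrix_castSucc,
    tridiag_apply_of_eq_succ a (by simp), tridiag_apply_of_succ_eq a (by simp)]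
  simp only [val_castSucc, val_last]
  ring

theorem det_tridiag_two_mul (n : ℕ) :
    (tridiag a (2 * n)).det = (-1) ^ n * ∏ k ∈ Finset.range n, a (2 * k + 1) ^ 2 := by
  induction n with
  | zero => simp
  | succ n ih =>
    rw [mul_add_one, det_tridiag_add_two, ih, Finset.prod_range_succ, pow_succ]
    ring

end Tridiag

/-- |det T_{2n}| = (a_1 a_3 ⋯ a_{2n-1})², equivalently
det T_{2n} = (−1)^n ∏_{k=1}^n a_{2k-1}².  (Here the product over `k ∈ range n`
of `a (2k+1)` is the product of the odd-indexed entries a_1, a_3, …, a_{2n-1}.) -/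
theorem det_tridiag_even (a : ℕ → ℝ) (n : ℕ) :
    |(tridiag a (2 * n)).det| = (∏ k ∈ Finset.range n, a (2 * k + 1)) ^ 2 ∧
    (tridiag a (2 * n)).det = (-1 : ℝ) ^ n * ∏ k ∈ Finset.range n, (a (2 * k + 1)) ^ 2 := by
  refine ⟨?_, det_tridiag_two_mul a n⟩
  rw [det_tridiag_two_mul, abs_mul, abs_neg_one_pow, one_mul, Finset.prod_pow,
    abs_of_nonneg (sq_nonneg _)]
end

section
/- Let (a_k) be a sequence of positive reals that is eventually nonincreasing, say a_{k+1} ≤ a_k for all k ≥ n₀. Then for every x ∈ ℓ² with ‖x‖ = 1 and every n ≥ n₀, the tail sum satisfies 2·|Σ_{k=n}^∞ a_k x_k x̄_{k+1}| ≤ a_n + a_{n+1}. -/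
/-!
Write `b j = a (n + j)` and `h j = ‖x (n + j)‖²`. By AM-GM the `j`-th term of the tail sum has norm
at most `b j (h j + h (j + 1)) / 2`. In `∑ b j (h j + h (j + 1))` the weight of `h 0` is `b 0` and
that of `h (m + 1)` is `b (m + 1) + b m ≤ b 1 + b 0`, as `b` is nonincreasing; so twice the tail sum
is at most `(b 0 + b 1) ∑ h ≤ a n + a (n + 1)`.
-/

open scoped ComplexConjugate

lemma tsum_mul_add_shift_le {b h : ℕ → ℝ} (hb : Antitone b) (hb_nonneg : 0 ≤ b)
    (hh : 0 ≤ h) (hs : Summable h) :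
    ∑' j, b j * (h j + h (j + 1)) ≤ (b 0 + b 1) * ∑' j, h j := by
  have hs₁ : Summable fun j => h (j + 1) := (summable_nat_add_iff 1).2 hs
  have hbh : Summable fun j => b j * h j :=
    (hs.mul_left (b 0)).of_nonneg_of_le (fun j => mul_nonneg (hb_nonneg j) (hh j))
      fun j => mul_le_mul_of_nonneg_right (hb (Nat.zero_le j)) (hh j)
  have hbh₁ : Summable fun j => b j * h (j + 1) :=
    (hs₁.mul_left (b 0)).of_nonneg_of_le (fun j => mul_nonneg (hb_nonneg j) (hh _))
      fun j => mul_le_mul_of_nonneg_right (hb (Nat.zero_le j)) (hh _)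
  have hweight : ∀ j, (b (j + 1) + b j) * h (j + 1) ≤ (b 0 + b 1) * h (j + 1) := fun j => by
    rw [add_comm (b 0)]
    exact mul_le_mul_of_nonneg_right (add_le_add (hb (by omega)) (hb (Nat.zero_le j))) (hh _)
  calc ∑' j, b j * (h j + h (j + 1))
      = b 0 * h 0 + ∑' j, (b (j + 1) + b j) * h (j + 1) := by
        simp only [mul_add, add_mul]
        rw [hbh.tsum_add hbh₁, hbh.tsum_eq_zero_add,
          ((summable_nat_add_iff 1).2 hbh).tsum_add hbh₁, add_assoc]
    _ ≤ (b 0 + b 1) * h 0 + (b 0 + b 1) * ∑' j, h (j + 1) := by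
        gcongr ?_ + ?_
        · exact mul_le_mul_of_nonneg_right (le_add_of_nonneg_right (hb_nonneg 1)) (hh 0)
        · rw [← tsum_mul_left]
          refine Summable.tsum_le_tsum hweight ?_ (hs₁.mul_left _)
          simpa only [add_mul] using ((summable_nat_add_iff 1).2 hbh).add hbh₁
    _ = (b 0 + b 1) * ∑' j, h j := by rw [hs.tsum_eq_zero_add, mul_add]

lemma two_mul_norm_tsum_mul_conj_succ_le {b : ℕ → ℝ} (hb : Antitone b) (hb_nonneg : 0 ≤ b)
    {y : ℕ → ℂ} (hy : Summable fun j => ‖y j‖ ^ 2) :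
    2 * ‖∑' j, (b j : ℂ) * y j * conj (y (j + 1))‖ ≤ (b 0 + b 1) * ∑' j, ‖y j‖ ^ 2 := by
  set h : ℕ → ℝ := fun j => ‖y j‖ ^ 2
  have hterm : ∀ j, 2 * ‖(b j : ℂ) * y j * conj (y (j + 1))‖ ≤ b j * (h j + h (j + 1)) := by
    intro j
    simp only [norm_mul, Complex.norm_real, Real.norm_of_nonneg (hb_nonneg j), Complex.norm_conj]
    calc 2 * (b j * ‖y j‖ * ‖y (j + 1)‖) = b j * (2 * ‖y j‖ * ‖y (j + 1)‖) := by ring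
      _ ≤ b j * (h j + h (j + 1)) :=
        mul_le_mul_of_nonneg_left (two_mul_le_add_sq _ _) (hb_nonneg j)
  have hbound : Summable fun j => b j * (h j + h (j + 1)) :=
    ((hy.add ((summable_nat_add_iff 1).2 hy)).mul_left (b 0)).of_nonneg_of_le
      (fun j => mul_nonneg (hb_nonneg j) (by positivity))
      fun j => mul_le_mul_of_nonneg_right (hb (Nat.zero_le j)) (by positivity)
  have hnorm : Summable fun j => ‖(b j : ℂ) * y j * conj (y (j + 1))‖ :=
    (hbound.div_const 2).of_nonneg_of_le (fun _ => norm_nonneg _) fun j => by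
      linarith [hterm j]
  calc 2 * ‖∑' j, (b j : ℂ) * y j * conj (y (j + 1))‖
      ≤ 2 * ∑' j, ‖(b j : ℂ) * y j * conj (y (j + 1))‖ := by
        gcongr; exact norm_tsum_le_tsum_norm hnorm
    _ ≤ ∑' j, b j * (h j + h (j + 1)) := by
        rw [← tsum_mul_left]; exact (hnorm.mul_left 2).tsum_le_tsum hterm hbound
    _ ≤ (b 0 + b 1) * ∑' j, h j :=
        tsum_mul_add_shift_le hb hb_nonneg (fun _ => sq_nonneg _) hy

/-- For a positive sequence (a_k) nonincreasing from n₀ on and a unit vector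
x ∈ ℓ², the tail sum satisfies 2·|Σ_{k=n}^∞ a_k x_k x̄_{k+1}| ≤ aₙ + a_{n+1}
for every n ≥ n₀. -/
theorem tail_sum_bound (a : ℕ → ℝ) (hpos : ∀ k, 0 < a k) (n₀ : ℕ)
    (hmono : ∀ k, n₀ ≤ k → a (k + 1) ≤ a k)
    (x : ℕ → ℂ) (hsum : Summable fun k => ‖x k‖ ^ 2)
    (hx : ∑' k, ‖x k‖ ^ 2 = 1) :
    ∀ n, n₀ ≤ n →
      2 * ‖∑' j : ℕ, (a (n + j) : ℂ) * x (n + j) * conj (x (n + j + 1))‖ ≤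
        a n + a (n + 1) := by
  intro n hn
  have hb : Antitone fun j => a (n + j) :=
    antitone_nat_of_succ_le fun j => hmono (n + j) (by omega)
  have htail : ∑' j, ‖x (n + j)‖ ^ 2 ≤ 1 :=
    hx ▸ tsum_comp_le_tsum_of_inj hsum (fun _ => sq_nonneg _) (add_right_injective n)
  have hy : Summable fun j => ‖x (n + j)‖ ^ 2 :=
    hsum.comp_injective (add_right_injective n)
  calc 2 * ‖∑' j : ℕ, (a (n + j) : ℂ) * x (n + j) * conj (x (n + j + 1))‖
      ≤ (a n + a (n + 1)) * ∑' j, ‖x (n + j)‖ ^ 2 :=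
        two_mul_norm_tsum_mul_conj_succ_le hb (fun j => (hpos (n + j)).le) hy
    _ ≤ a n + a (n + 1) :=
        mul_le_of_le_one_right (add_pos (hpos n) (hpos (n + 1))).le htail
end

section
/- Let J be the Jacobi operator with positive off-diagonal entries (a_n), and let J_n = P_n J P_n where P_n is the orthogonal projection onto the span of e_1, ..., e_n. If a_{k+1} ≤ a_k for all k ≥ n₀, then for all n ≥ n₀, ‖J − J_n‖ ≤ a_n + a_{n+1}. -/
/-!
`D = J - P_{n+1} J P_{n+1}` keeps exactly the couplings `a_k` between `e_k` and `e_{k+1}` with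
`k ≥ n`. Splitting them by the parity of `k - n` writes `D` as a sum of two operators
`x ↦ w · (x ∘ σ)`, where `σ` swaps the indices within the pairs `{n, n+1}, {n+2, n+3}, …`
(resp. `{n+1, n+2}, {n+3, n+4}, …`). Such a weighted composition with an injective `σ` has norm
at most `sup |w|`, and since `a` is nonincreasing from `n₀` on, the two weight sequences are
bounded by `a_n` and `a_{n+1}`.
-/

open ContinuousLinearMap

/-- ℓ²(ℕ), with 0-based indexing of coordinates. -/
noncomputable abbrev H2 : Type := lp (fun _ : ℕ => ℂ) 2

/-- The standard basis vectors of ℓ²(ℕ): `e n` corresponds to the paper's e_{n+1}. -/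
noncomputable def e (n : ℕ) : H2 := lp.single 2 n 1

open scoped ENNReal

section WeightedComposition

variable {ι 𝕜 E : Type*} [NontriviallyNormedField 𝕜] [NormedAddCommGroup E] [NormedSpace 𝕜 E]
  {p : ℝ≥0∞} {c : ℝ} {σ : ι → ι}

theorem Memℓp.smul_comp {w : ι → 𝕜} {x : ι → E} (hx : Memℓp x p) (hp : 0 < p.toReal)
    (hw : ∀ i, ‖w i‖ ≤ c) (hσ : σ.Injective) : Memℓp (fun i => w i • x (σ i)) p := by
  refine memℓp_gen <| Summable.of_nonneg_of_le (fun i => by positivity) (fun i => ?_)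
    (((hx.summable hp).comp_injective hσ).mul_left (c ^ p.toReal))
  rw [norm_smul, Real.mul_rpow (norm_nonneg _) (norm_nonneg _)]
  exact mul_le_mul_of_nonneg_right (Real.rpow_le_rpow (norm_nonneg _) (hw i) hp.le) (by positivity)

theorem lp.norm_le_of_norm_apply_le_comp (hp : 0 < p.toReal) (hc : 0 ≤ c) (hσ : σ.Injective)
    {x y : lp (fun _ : ι => E) p} (h : ∀ i, ‖y i‖ ≤ c * ‖x (σ i)‖) : ‖y‖ ≤ c * ‖x‖ := by
  refine lp.norm_le_of_tsum_le hp (mul_nonneg hc (lp.norm_nonneg' x)) ?_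
  have hsum := (lp.memℓp x).summable hp
  calc ∑' i, ‖y i‖ ^ p.toReal
      ≤ ∑' i, c ^ p.toReal * ‖x (σ i)‖ ^ p.toReal := by
        refine Summable.tsum_le_tsum (fun i => ?_) ((lp.memℓp y).summable hp)
          ((hsum.comp_injective hσ).mul_left _)
        rw [← Real.mul_rpow hc (norm_nonneg _)]
        gcongr
        exact h i
    _ ≤ c ^ p.toReal * ∑' i, ‖x i‖ ^ p.toReal := by
        rw [tsum_mul_left]
        exact mul_le_mul_of_nonneg_left
          (tsum_comp_le_tsum_of_inj hsum (fun i => by positivity) hσ) (by positivity)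
    _ = (c * ‖x‖) ^ p.toReal := by
        rw [Real.mul_rpow hc (lp.norm_nonneg' x), lp.norm_rpow_eq_tsum hp x]

variable [Fact (1 ≤ p)]

noncomputable def lp.weightedCompCLM (hp : p ≠ ⊤) (w : ι → 𝕜) (hc : 0 ≤ c) (hw : ∀ i, ‖w i‖ ≤ c)
    (hσ : σ.Injective) : lp (fun _ : ι => E) p →L[𝕜] lp (fun _ : ι => E) p :=
  have hp' : 0 < p.toReal := ENNReal.toReal_pos (zero_lt_one.trans_le Fact.out).ne' hp
  LinearMap.mkContinuous
    { toFun x := ⟨fun i => w i • x (σ i), (lp.memℓp x).smul_comp hp' hw hσ⟩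
      map_add' x y := lp.ext <| funext fun i => smul_add _ _ _
      map_smul' a x := lp.ext <| funext fun i => smul_comm _ _ _ }
    c fun x => lp.norm_le_of_norm_apply_le_comp hp' hc hσ fun i => by
      change ‖w i • x (σ i)‖ ≤ c * ‖x (σ i)‖
      rw [norm_smul]
      exact mul_le_mul_of_nonneg_right (hw i) (norm_nonneg _)

variable (hp : p ≠ ⊤) {w : ι → 𝕜} (hc : 0 ≤ c) (hw : ∀ i, ‖w i‖ ≤ c) (hσ : σ.Injective)

@[simp]
theorem lp.weightedCompCLM_apply (x : lp (fun _ : ι => E) p) (i : ι) :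
    lp.weightedCompCLM hp w hc hw hσ x i = w i • x (σ i) :=
  rfl

theorem lp.norm_weightedCompCLM_le :
    ‖(lp.weightedCompCLM hp w hc hw hσ : lp (fun _ : ι => E) p →L[𝕜] _)‖ ≤ c := by
  unfold lp.weightedCompCLM
  exact LinearMap.mkContinuous_norm_le _ hc _

theorem lp.weightedCompCLM_single [DecidableEq ι] (hσ' : σ.Involutive) (k : ι) (v : E) :
    lp.weightedCompCLM hp w hc hw hσ'.injective (lp.single p k v) =
      w (σ k) • lp.single p (σ k) v := by
  ext i
  simp only [lp.weightedCompCLM_apply, lp.coeFn_smul, Pi.smul_apply, lp.single_apply,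
    Pi.single_apply, hσ'.eq_iff]
  split_ifs with h
  · rw [h]
  · rw [smul_zero, smul_zero]

end WeightedComposition

/-- The partner of `j` in the pairing `{m, m+1}, {m+2, m+3}, …`; indices below `m` are fixed. -/
def pairSwap (m j : ℕ) : ℕ :=
  if j < m then j else if (j - m) % 2 = 0 then j + 1 else j - 1

/-- `b` at the smaller index of the pair of `j`, and `0` below `m`. -/
def pairWeight {R : Type*} [Zero R] (b : ℕ → R) (m j : ℕ) : R :=
  if j < m then 0 else if (j - m) % 2 = 0 then b j else b (j - 1)

theorem pairSwap_involutive (m : ℕ) : (pairSwap m).Involutive := by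
  intro j
  unfold pairSwap
  split_ifs <;> omega

theorem norm_pairWeight_le {a : ℕ → ℝ} {m : ℕ} (h0 : ∀ k, 0 ≤ a k)
    (ha : AntitoneOn a (Set.Ici m)) (j : ℕ) : ‖pairWeight (fun k => (a k : ℂ)) m j‖ ≤ a m := by
  unfold pairWeight
  split_ifs with hj hpar
  · simpa using h0 m
  · rw [Complex.norm_real, Real.norm_of_nonneg (h0 j)]
    exact ha (Set.mem_Ici.2 le_rfl) (Set.mem_Ici.2 (by omega)) (by omega)
  · rw [Complex.norm_real, Real.norm_of_nonneg (h0 _)]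
    exact ha (Set.mem_Ici.2 le_rfl) (Set.mem_Ici.2 (by omega)) (by omega)

theorem pairWeight_smul_add_pairWeight_smul {R M : Type*} [Semiring R] [AddCommMonoid M]
    [Module R M] (b : ℕ → R) (f : ℕ → M) (n k : ℕ) :
    pairWeight b n (pairSwap n k) • f (pairSwap n k) +
        pairWeight b (n + 1) (pairSwap (n + 1) k) • f (pairSwap (n + 1) k) =
      (if n ≤ k then b k • f (k + 1) else 0) + (if n < k then b (k - 1) • f (k - 1) else 0) := by
  unfold pairWeight pairSwap
  split_ifs <;> first | omega | (simp_all <;> exact add_comm _ _)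

theorem sub_truncation_apply_e {b : ℕ → ℂ} {J : H2 →L[ℂ] H2} (hJ0 : J (e 0) = b 0 • e 1)
    (hJ : ∀ n : ℕ, J (e (n + 1)) = b (n + 1) • e (n + 2) + b n • e n)
    {P : ℕ → H2 →L[ℂ] H2} (hP : ∀ n k, P n (e k) = if k < n then e k else 0) (n k : ℕ) :
    (J - P (n + 1) ∘L J ∘L P (n + 1)) (e k) =
      (if n ≤ k then b k • e (k + 1) else 0) + (if n < k then b (k - 1) • e (k - 1) else 0) := by
  have hJ' : ∀ k, J (e k) = b k • e (k + 1) + if 0 < k then b (k - 1) • e (k - 1) else 0 := by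
    rintro (_ | k)
    · simpa using hJ0
    · simpa using hJ k
  rw [sub_apply, comp_apply, comp_apply, hP]
  by_cases hk : k < n + 1
  · rw [if_pos hk, hJ', if_neg (by omega : ¬ n < k), map_add, map_smul, hP]
    split_ifs <;> first | omega | simp [hP, show k - 1 < n + 1 by omega]
  · rw [if_neg hk, map_zero, map_zero, sub_zero, hJ', if_pos (by omega : n ≤ k),
      if_pos (by omega : n < k), if_pos (by omega : 0 < k)]

theorem jacobi_truncation_bound_general (a : ℕ → ℝ) (hpos : ∀ n, 0 < a n)
    (n₀ : ℕ)
    (hmono : ∀ k, n₀ ≤ k → a (k + 1) ≤ a k)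
    (J : H2 →L[ℂ] H2)
    (hJ0 : J (e 0) = (a 0 : ℂ) • e 1)
    (hJ : ∀ n : ℕ, J (e (n + 1)) = (a (n + 1) : ℂ) • e (n + 2) + (a n : ℂ) • e n)
    (P : ℕ → H2 →L[ℂ] H2)
    (hP : ∀ n k, P n (e k) = if k < n then e k else 0) :
    ∀ n, n₀ ≤ n → ‖J - P (n + 1) ∘L J ∘L P (n + 1)‖ ≤ a n + a (n + 1) := by
  intro n hn
  have h0 : ∀ k, 0 ≤ a k := fun k => (hpos k).le
  have hanti : ∀ m, n₀ ≤ m → AntitoneOn a (Set.Ici m) := fun m hm =>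
    (antitoneOn_nat_Ici_of_succ_le hmono).mono (Set.Ici_subset_Ici.2 hm)
  let pairOp (m : ℕ) (hm : n₀ ≤ m) : H2 →L[ℂ] H2 :=
    lp.weightedCompCLM ENNReal.ofNat_ne_top (pairWeight (fun k => (a k : ℂ)) m) (h0 m)
      (norm_pairWeight_le h0 (hanti m hm)) (pairSwap_involutive m).injective
  have hsplit : J - P (n + 1) ∘L J ∘L P (n + 1) = pairOp n hn + pairOp (n + 1) (by omega) := by
    refine lp.ext_continuousLinearMap ENNReal.ofNat_ne_top fun k => ext_ring ?_
    rw [comp_apply, comp_apply, lp.singleContinuousLinearMap_apply, ← e, add_apply,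
      sub_truncation_apply_e (b := fun k => (a k : ℂ)) hJ0 hJ hP,
      ← pairWeight_smul_add_pairWeight_smul (fun k => (a k : ℂ)) e]
    simp only [pairOp, e]
    rw [lp.weightedCompCLM_single _ _ _ (pairSwap_involutive n),
      lp.weightedCompCLM_single _ _ _ (pairSwap_involutive (n + 1))]
  calc ‖J - P (n + 1) ∘L J ∘L P (n + 1)‖ ≤ ‖pairOp n hn‖ + ‖pairOp (n + 1) (by omega)‖ := by
        rw [hsplit]; exact norm_add_le _ _
    _ ≤ a n + a (n + 1) :=
        add_le_add (lp.norm_weightedCompCLM_le ..) (lp.norm_weightedCompCLM_le ..)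

/-- For the Jacobi operator J (with J e_n = a_n e_{n+1} + a_{n-1} e_{n-1}, 0-indexed)
and P n the orthogonal projection onto the first n coordinates, if (a_k) is
nonincreasing from n₀ on, then ‖J − P_{n+1} J P_{n+1}‖ ≤ aₙ + a_{n+1} for all n ≥ n₀
(this is the paper's ‖J − J_m‖ ≤ a_m + a_{m+1}, m = n + 1 in 1-based indexing). -/
theorem jacobi_truncation_bound (a : ℕ → ℝ) (hpos : ∀ n, 0 < a n)
    (hbdd : ∃ C : ℝ, ∀ n, a n ≤ C) (n₀ : ℕ)
    (hmono : ∀ k, n₀ ≤ k → a (k + 1) ≤ a k)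
    (J : H2 →L[ℂ] H2)
    (hJ0 : J (e 0) = (a 0 : ℂ) • e 1)
    (hJ : ∀ n : ℕ, J (e (n + 1)) = (a (n + 1) : ℂ) • e (n + 2) + (a n : ℂ) • e n)
    (P : ℕ → H2 →L[ℂ] H2)
    (hP : ∀ n k, P n (e k) = if k < n then e k else 0) :
    ∀ n, n₀ ≤ n → ‖J - P (n + 1) ∘L J ∘L P (n + 1)‖ ≤ a n + a (n + 1) :=
  jacobi_truncation_bound_general a hpos n₀ hmono J hJ0 hJ P hP
end

section
/- Let (a_n) be positive reals with a_{n+1}/a_n → 0, and for each n let λ_1^{(2n)} ≥ λ_2^{(2n)} ≥ ... ≥ λ_n^{(2n)} > 0 be the positive eigenvalues of the 2n×2n zero-diagonal symmetric tridiagonal matrix T_{2n} with off-diagonals a_1,...,a_{2n-1}, so that ∏_{k=1}^n λ_k^{(2n)} = ∏_{k=1}^n a_{2k-1}. Then the inequality λ_k^{(2k)} ≥ a_{2k-1}/2 holds for infinitely many k ∈ ℕ. -/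
open Filter

/-!
Ordering coordinates as odd positions `x` and even positions `y` puts `T_{2n}` in the form
`[[0, B], [Bᵀ, 0]]`, with `B` upper bidiagonal, diagonal `a 1, a 3, …` and superdiagonal
`a 2, a 4, …`. Since `σ T σ = -T` for `σ = diag ((-1)^k)`, an eigenvector `(x, y)` for `μ ≠ 0`
is orthogonal to the eigenvector `(x, -y)` for `-μ`, so `‖x‖₂ = ‖y‖₂`. The rows `B x = μ y`,
solved backwards from the last one, give `‖x‖₁ ≤ μ ‖y‖₂ W`, where `W` is the sum of the entries
of `|B⁻¹|`; as `‖x‖₂ ≤ ‖x‖₁`, every positive eigenvalue is at least `1 / W`. Finally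
`W = ∑_{j<n} Q_j / a_{2j+1}` with `Q_j = ∑_{i ≤ j} ∏_{i ≤ l < j} a_{2l+2} / a_{2l+1}`, and both
`Q_j` and `a_{2n-1} W` obey recursions `u (n + 1) = c n + ρ n * u n` with `c → 1` and `ρ → 0`
when `a_{k+1} / a_k → 0`. So `a_{2n-1} W → 1`, and eventually the smallest positive eigenvalue
exceeds `a_{2n-1} / 2`.
-/

open Finset Matrix Topology

theorem tendsto_of_succ_eq_add_mul {u c ρ : ℕ → ℝ} {L : ℝ} (hc : Tendsto c atTop (𝓝 L))
    (hρ : Tendsto ρ atTop (𝓝 0)) (hu : ∀ n, u (n + 1) = c n + ρ n * u n) :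
    Tendsto u atTop (𝓝 L) := by
  obtain ⟨M, hM⟩ : ∃ M, ∀ᶠ n in atTop, |u n| ≤ M := by
    have hc' : ∀ᶠ n in atTop, |c n| ≤ |L| + 1 :=
      hc.abs.eventually (eventually_le_nhds (lt_add_one |L|))
    have hρ' : ∀ᶠ n in atTop, |ρ n| ≤ 1 / 2 := by
      simpa using hρ.abs.eventually (eventually_le_nhds (by norm_num : |(0 : ℝ)| < 1 / 2))
    obtain ⟨N, hN⟩ := eventually_atTop.mp (hc'.and hρ')
    set M := max |u N| (2 * (|L| + 1))
    refine ⟨M, eventually_atTop.mpr ⟨N, fun n hn => ?_⟩⟩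
    induction n, hn using Nat.le_induction with
    | base => exact le_max_left _ _
    | succ n hn ih =>
      obtain ⟨hcn, hρn⟩ := hN n hn
      calc |u (n + 1)| ≤ |c n| + |ρ n| * |u n| := by rw [hu, ← abs_mul]; exact abs_add_le _ _
        _ ≤ (|L| + 1) + 1 / 2 * M := by gcongr
        _ ≤ M := by linarith [le_max_right |u N| (2 * (|L| + 1))]
  rw [← tendsto_add_atTop_iff_nat 1, tendsto_iff_norm_sub_tendsto_zero]
  have hbound : Tendsto (fun n => |c n - L| + |ρ n| * M) atTop (𝓝 0) := by
    simpa using (tendsto_iff_norm_sub_tendsto_zero.mp hc).add (hρ.abs.mul_const M)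
  refine squeeze_zero' (Eventually.of_forall fun n => norm_nonneg _) ?_ hbound
  filter_upwards [hM] with n hn
  calc ‖u (n + 1) - L‖ = |(c n - L) + ρ n * u n| := by rw [Real.norm_eq_abs, hu, add_sub_right_comm]
    _ ≤ |c n - L| + |ρ n| * M := (abs_add_le _ _).trans (by rw [abs_mul]; gcongr)

def accumWeight (r : ℕ → ℝ) : ℕ → ℝ
  | 0 => 1
  | m + 1 => 1 + r m * accumWeight r m

theorem tendsto_accumWeight {r : ℕ → ℝ} (hr : Tendsto r atTop (𝓝 0)) :
    Tendsto (accumWeight r) atTop (𝓝 1) :=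
  tendsto_of_succ_eq_add_mul tendsto_const_nhds hr fun _ => rfl

theorem one_le_accumWeight {r : ℕ → ℝ} (hr : ∀ i, 0 ≤ r i) (m : ℕ) : 1 ≤ accumWeight r m := by
  induction m with
  | zero => exact le_rfl
  | succ m ih => exact le_add_of_nonneg_right (mul_nonneg (hr m) (zero_le_one.trans ih))

theorem sum_le_sum_accumWeight_mul {r u b : ℕ → ℝ} {n : ℕ} (hr : ∀ i, 0 ≤ r i)
    (hu : ∀ i < n, u i ≤ b i + r i * u (i + 1)) (hn : u n = 0) :
    ∑ i ∈ range n, u i ≤ ∑ i ∈ range n, accumWeight r i * b i := by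
  have key : ∀ m ≤ n, ∑ i ∈ range m, u i ≤
      ∑ i ∈ range m, accumWeight r i * b i + (accumWeight r m - 1) * u m := by
    intro m hm
    induction m with
    | zero => simp [accumWeight]
    | succ m ih =>
      have hum := mul_le_mul_of_nonneg_left (hu m (by omega))
        (zero_le_one.trans (one_le_accumWeight hr m))
      rw [sum_range_succ, sum_range_succ, accumWeight]
      linarith [ih (by omega)]
  simpa [hn] using key n le_rfl

theorem sum_range_two_mul {M : Type*} [AddCommMonoid M] (f : ℕ → M) (n : ℕ) :
    ∑ j ∈ range (2 * n), f j = ∑ i ∈ range n, (f (2 * i) + f (2 * i + 1)) := by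
  induction n with
  | zero => simp
  | succ n ih =>
    rw [mul_add, mul_one, sum_range_succ, sum_range_succ, sum_range_succ, ← ih, add_assoc]

theorem tridiag_transpose (a : ℕ → ℝ) (m : ℕ) : (tridiag a m)ᵀ = tridiag a m := by
  ext i j
  simp only [transpose_apply, tridiag, of_apply]
  split_ifs <;> first | rfl | omega

theorem tridiag_mulVec_alternating (a : ℕ → ℝ) {m : ℕ} (v : Fin m → ℝ) :
    tridiag a m *ᵥ (fun k : Fin m => (-1) ^ (k : ℕ) * v k) =
      -fun k : Fin m => (-1) ^ (k : ℕ) * (tridiag a m *ᵥ v) k := by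
  ext i
  simp only [mulVec, dotProduct, Pi.neg_apply, mul_sum, ← sum_neg_distrib]
  refine sum_congr rfl fun k _ => ?_
  simp only [tridiag, of_apply]
  split_ifs with h₁ h₂
  · rw [← h₁]; ring
  · rw [← h₂]; ring
  · simp

theorem sum_alternating_sq_eq_zero {a : ℕ → ℝ} {m : ℕ} {v : Fin m → ℝ} {μ : ℝ} (hμ : μ ≠ 0)
    (hv : tridiag a m *ᵥ v = μ • v) : ∑ k : Fin m, (-1) ^ (k : ℕ) * v k ^ 2 = 0 := by
  set u : Fin m → ℝ := fun k => (-1) ^ (k : ℕ) * v k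
  have hsymm : u ⬝ᵥ (tridiag a m *ᵥ v) = (tridiag a m *ᵥ u) ⬝ᵥ v := by
    rw [dotProduct_mulVec, ← vecMul_transpose, tridiag_transpose]
  rw [hv, tridiag_mulVec_alternating, hv] at hsymm
  have hanti : μ * (u ⬝ᵥ v) = -(μ * (u ⬝ᵥ v)) := by
    calc μ * (u ⬝ᵥ v) = u ⬝ᵥ (μ • v) := by rw [dotProduct_smul, smul_eq_mul]
      _ = _ := hsymm
      _ = -(μ * (u ⬝ᵥ v)) := by
        simp only [dotProduct, mul_sum, ← sum_neg_distrib]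
        refine sum_congr rfl fun k _ => ?_
        simp only [u, Pi.neg_apply, Pi.smul_apply, smul_eq_mul]
        ring
  have horth : u ⬝ᵥ v = 0 :=
    (mul_eq_zero.mp (show μ * (u ⬝ᵥ v) = 0 by linarith)).resolve_left hμ
  rw [← horth]
  exact sum_congr rfl fun k _ => by simp only [u]; ring

theorem extend_val_eq_zero_of_le {m : ℕ} (v : Fin m → ℝ) {k : ℕ} (hk : m ≤ k) :
    Function.extend Fin.val v 0 k = 0 :=
  Function.extend_apply' _ _ _ fun ⟨i, hi⟩ => by omega

theorem tridiag_mulVec_apply_succ (a : ℕ → ℝ) {m : ℕ} (v : Fin m → ℝ) {j : ℕ} (hj : j + 1 < m) :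
    (tridiag a m *ᵥ v) ⟨j + 1, hj⟩ = a (j + 1) * Function.extend Fin.val v 0 j +
      a (j + 2) * Function.extend Fin.val v 0 (j + 2) := by
  set p := Function.extend Fin.val v 0
  have hp : ∀ k : Fin m, v k = p k := fun k => (Fin.val_injective.extend_apply v 0 k).symm
  simp only [mulVec, dotProduct, tridiag, of_apply, hp]
  rw [Fin.sum_univ_eq_sum_range (fun k => (if j + 1 + 1 = k then a (j + 1 + 1)
    else if k + 1 = j + 1 then a (k + 1) else 0) * p k) m, sum_eq_add j (j + 2) (by omega)]
  · rw [if_neg (by omega), if_pos rfl, if_pos rfl]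
  · intro c _ hc; rw [if_neg (by omega), if_neg (by omega), zero_mul]
  · intro h; exact absurd (mem_range.2 (by omega)) h
  · intro h
    have hp' : p (j + 2) = 0 := extend_val_eq_zero_of_le v (by simpa using h)
    rw [hp', mul_zero]

noncomputable def offDiagRatio (a : ℕ → ℝ) (i : ℕ) : ℝ := a (2 * i + 2) / a (2 * i + 1)

/-- `W` for `T_{2k+2}`, the sum of the entries of `|B⁻¹|`; `accumWeight (offDiagRatio a) j` is
`Q_j`. -/
noncomputable def inverseBound (a : ℕ → ℝ) (k : ℕ) : ℝ :=
  ∑ i ∈ range (k + 1), accumWeight (offDiagRatio a) i / a (2 * i + 1)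

section

variable {a : ℕ → ℝ}

theorem offDiagRatio_nonneg (ha : ∀ n, 1 ≤ n → 0 < a n) (i : ℕ) : 0 ≤ offDiagRatio a i :=
  div_nonneg (ha _ (by omega)).le (ha _ (by omega)).le

theorem inverseBound_pos (ha : ∀ n, 1 ≤ n → 0 < a n) (k : ℕ) : 0 < inverseBound a k :=
  sum_pos (fun i _ => div_pos (zero_lt_one.trans_le (one_le_accumWeight (offDiagRatio_nonneg ha) i))
    (ha _ (by omega))) nonempty_range_add_one

theorem tendsto_comp_two_mul_add {α : Type*} {l : Filter α} {f : ℕ → α} (hf : Tendsto f atTop l)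
    (c : ℕ) : Tendsto (fun i => f (2 * i + c)) atTop l :=
  hf.comp (tendsto_atTop_atTop.mpr fun b => ⟨b, fun i hi => by omega⟩)

theorem tendsto_mul_inverseBound (ha : ∀ n, 1 ≤ n → 0 < a n)
    (hratio : Tendsto (fun n => a (n + 1) / a n) atTop (𝓝 0)) :
    Tendsto (fun k => a (2 * k + 1) * inverseBound a k) atTop (𝓝 1) := by
  have hr : Tendsto (offDiagRatio a) atTop (𝓝 0) := tendsto_comp_two_mul_add hratio 1
  have hρ : Tendsto (fun k => a (2 * k + 3) / a (2 * k + 1)) atTop (𝓝 0) := by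
    have := (tendsto_comp_two_mul_add hratio 2).mul hr
    rw [zero_mul] at this
    refine this.congr fun k => ?_
    have := (ha (2 * k + 2) (by omega)).ne'
    simp only [offDiagRatio]
    field_simp
  refine tendsto_of_succ_eq_add_mul ((tendsto_accumWeight hr).comp (tendsto_add_atTop_nat 1)) hρ
    fun k => ?_
  have h₁ := (ha (2 * k + 1) (by omega)).ne'
  have h₃ := (ha (2 * k + 3) (by omega)).ne'
  rw [inverseBound, sum_range_succ, inverseBound, show 2 * (k + 1) + 1 = 2 * k + 3 by ring]
  simp only [Function.comp_apply]
  field_simp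
  ring

theorem sum_abs_le_mul_inverseBound {p : ℕ → ℝ} {μ Y : ℝ} {k : ℕ} (ha : ∀ n, 1 ≤ n → 0 < a n)
    (hμ : 0 ≤ μ)
    (hrow : ∀ i ≤ k, μ * p (2 * i + 1) = a (2 * i + 1) * p (2 * i) + a (2 * i + 2) * p (2 * i + 2))
    (hend : p (2 * (k + 1)) = 0) (hY : ∀ i ≤ k, |p (2 * i + 1)| ≤ Y) :
    ∑ i ∈ range (k + 1), |p (2 * i)| ≤ μ * Y * inverseBound a k := by
  have hstep : ∀ i < k + 1,
      |p (2 * i)| ≤ μ * Y / a (2 * i + 1) + offDiagRatio a i * |p (2 * (i + 1))| := by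
    intro i hi
    have hd := ha (2 * i + 1) (by omega)
    have he := ha (2 * i + 2) (by omega)
    rw [offDiagRatio, div_mul_eq_mul_div, ← add_div, le_div_iff₀ hd, mul_comm,
      show 2 * (i + 1) = 2 * i + 2 by ring]
    calc a (2 * i + 1) * |p (2 * i)| = |μ * p (2 * i + 1) - a (2 * i + 2) * p (2 * i + 2)| := by
          rw [hrow i (by omega), add_sub_cancel_right, abs_mul, abs_of_pos hd]
      _ ≤ μ * |p (2 * i + 1)| + a (2 * i + 2) * |p (2 * i + 2)| := by
          refine (abs_sub _ _).trans_eq ?_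
          rw [abs_mul, abs_mul, abs_of_nonneg hμ, abs_of_pos he]
      _ ≤ μ * Y + a (2 * i + 2) * |p (2 * i + 2)| := by gcongr; exact hY i (by omega)
  calc ∑ i ∈ range (k + 1), |p (2 * i)|
      ≤ ∑ i ∈ range (k + 1), accumWeight (offDiagRatio a) i * (μ * Y / a (2 * i + 1)) :=
        sum_le_sum_accumWeight_mul (offDiagRatio_nonneg ha) hstep (by simp [hend])
    _ = μ * Y * inverseBound a k := by
        rw [inverseBound, mul_sum]
        exact sum_congr rfl fun i _ => by ring

theorem sum_sq_eq_zero_of_mul_inverseBound_lt_one {p : ℕ → ℝ} {μ : ℝ} {k : ℕ}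
    (ha : ∀ n, 1 ≤ n → 0 < a n) (hμ : 0 ≤ μ)
    (hrow : ∀ i ≤ k, μ * p (2 * i + 1) = a (2 * i + 1) * p (2 * i) + a (2 * i + 2) * p (2 * i + 2))
    (hend : p (2 * (k + 1)) = 0) (halt : ∑ j ∈ range (2 * (k + 1)), (-1) ^ j * p j ^ 2 = 0)
    (hlt : μ * inverseBound a k < 1) :
    ∑ j ∈ range (2 * (k + 1)), p j ^ 2 = 0 := by
  set Y := √(∑ i ∈ range (k + 1), p (2 * i + 1) ^ 2)
  have hY2 : Y ^ 2 = ∑ i ∈ range (k + 1), p (2 * i + 1) ^ 2 :=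
    Real.sq_sqrt (sum_nonneg fun i _ => sq_nonneg _)
  have hY : ∀ i ≤ k, |p (2 * i + 1)| ≤ Y := fun i hi => Real.abs_le_sqrt
    (single_le_sum (f := fun i => p (2 * i + 1) ^ 2) (fun j _ => sq_nonneg _)
      (mem_range.2 (by omega)))
  have hbal : ∑ i ∈ range (k + 1), p (2 * i) ^ 2 = Y ^ 2 := by
    rw [sum_range_two_mul] at halt
    rw [hY2, ← sub_eq_zero, ← sum_sub_distrib, ← halt]
    refine sum_congr rfl fun i _ => ?_
    rw [(even_two_mul i).neg_one_pow, (odd_two_mul_add_one i).neg_one_pow]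
    ring
  have hμW : 0 ≤ μ * inverseBound a k := mul_nonneg hμ (inverseBound_pos ha k).le
  have hsq : Y ^ 2 ≤ (μ * inverseBound a k) ^ 2 * Y ^ 2 := by
    calc Y ^ 2 = ∑ i ∈ range (k + 1), p (2 * i) ^ 2 := hbal.symm
      _ ≤ (∑ i ∈ range (k + 1), |p (2 * i)|) ^ 2 := by
          simpa only [sq_abs] using sum_sq_le_sq_sum_of_nonneg (fun i _ => abs_nonneg (p (2 * i)))
      _ ≤ (μ * Y * inverseBound a k) ^ 2 := pow_le_pow_left₀ (sum_nonneg fun i _ => abs_nonneg _)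
          (sum_abs_le_mul_inverseBound ha hμ hrow hend hY) 2
      _ = (μ * inverseBound a k) ^ 2 * Y ^ 2 := by ring
  have hY0 : Y ^ 2 = 0 := by nlinarith [pow_lt_one₀ hμW hlt two_ne_zero]
  rw [sum_range_two_mul, sum_add_distrib, hbal, ← hY2, hY0, add_zero]

theorem one_le_mul_inverseBound_of_hasEigenvalue (ha : ∀ n, 1 ≤ n → 0 < a n) {k : ℕ} {μ : ℝ}
    (hμ : 0 < μ) (h : Module.End.HasEigenvalue (toLin' (tridiag a (2 * (k + 1)))) μ) :
    1 ≤ μ * inverseBound a k := by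
  obtain ⟨v, hv⟩ := h.exists_hasEigenvector
  have hmul : tridiag a (2 * (k + 1)) *ᵥ v = μ • v := by
    simpa [toLin'_apply] using hv.apply_eq_smul
  set p := Function.extend Fin.val v 0
  have hp : ∀ j : Fin (2 * (k + 1)), v j = p j :=
    fun j => (Fin.val_injective.extend_apply v 0 j).symm
  by_contra! hlt
  refine hv.2 (dotProduct_self_eq_zero.mp ?_)
  have hrow : ∀ i ≤ k,
      μ * p (2 * i + 1) = a (2 * i + 1) * p (2 * i) + a (2 * i + 2) * p (2 * i + 2) := by
    intro i hi
    have hi' : 2 * i + 1 < 2 * (k + 1) := by omega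
    rw [← tridiag_mulVec_apply_succ a v hi', hmul, Pi.smul_apply, smul_eq_mul, hp]
  have halt : ∑ j ∈ range (2 * (k + 1)), (-1) ^ j * p j ^ 2 = 0 := by
    rw [← Fin.sum_univ_eq_sum_range (fun j => (-1) ^ j * p j ^ 2), ← sum_alternating_sq_eq_zero
      hμ.ne' hmul]
    simp only [hp]
  have hsum := sum_sq_eq_zero_of_mul_inverseBound_lt_one ha hμ.le hrow
    (extend_val_eq_zero_of_le v le_rfl) halt hlt
  rw [← Fin.sum_univ_eq_sum_range (fun j => p j ^ 2)] at hsum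
  simpa only [dotProduct, hp, sq] using hsum

end

theorem eigen_lower_bound_frequently_general (a : ℕ → ℝ) (hpos : ∀ n, 1 ≤ n → 0 < a n)
    (hratio : Tendsto (fun n => a (n + 1) / a n) atTop (nhds 0))
    (lam : ℕ → ℕ → ℝ)
    (hlpos : ∀ n k, 1 ≤ k → k ≤ n → 0 < lam n k)
    (heig : ∀ n k, 1 ≤ k → k ≤ n →
      Module.End.HasEigenvalue (Matrix.toLin' (tridiag a (2 * n))) (lam n k)) :
    ∃ᶠ k in atTop, a (2 * k - 1) / 2 ≤ lam k k := by
  have hsmall : ∀ᶠ k in atTop, a (2 * k + 1) * inverseBound a k < 2 :=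
    (tendsto_mul_inverseBound hpos hratio).eventually (gt_mem_nhds one_lt_two)
  refine (tendsto_add_atTop_nat 1).frequently (p := fun n => a (2 * n - 1) / 2 ≤ lam n n)
    (hsmall.mono fun k hk => ?_).frequently
  have hμ := hlpos (k + 1) (k + 1) le_add_self le_rfl
  have hbound := one_le_mul_inverseBound_of_hasEigenvalue hpos hμ
    (heig (k + 1) (k + 1) le_add_self le_rfl)
  rw [show 2 * (k + 1) - 1 = 2 * k + 1 by omega]
  refine (lt_of_mul_lt_mul_right ?_ (inverseBound_pos hpos k).le).le
  linarith

/-- If a_{n+1}/a_n → 0 and, for each n, `lam n 1 > lam n 2 > ⋯ > lam n n > 0` are the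
positive eigenvalues of T_{2n} (so that ∏_{k=1}^n lam n k = ∏_{k=1}^n a_{2k-1}), then
lam k k ≥ a_{2k-1}/2 for infinitely many k. -/
theorem eigen_lower_bound_frequently (a : ℕ → ℝ) (hpos : ∀ n, 1 ≤ n → 0 < a n)
    (hratio : Tendsto (fun n => a (n + 1) / a n) atTop (nhds 0))
    (lam : ℕ → ℕ → ℝ)
    (hlpos : ∀ n k, 1 ≤ k → k ≤ n → 0 < lam n k)
    (hstrict : ∀ n j k, 1 ≤ j → j < k → k ≤ n → lam n k < lam n j)
    (heig : ∀ n k, 1 ≤ k → k ≤ n →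
      Module.End.HasEigenvalue (Matrix.toLin' (tridiag a (2 * n))) (lam n k))
    (hspec : ∀ n (μ : ℝ), 0 < μ →
      Module.End.HasEigenvalue (Matrix.toLin' (tridiag a (2 * n))) μ →
      ∃ k, 1 ≤ k ∧ k ≤ n ∧ μ = lam n k)
    (hprod : ∀ n, ∏ k ∈ Finset.Icc 1 n, lam n k = ∏ k ∈ Finset.Icc 1 n, a (2 * k - 1)) :
    ∃ᶠ k in atTop, a (2 * k - 1) / 2 ≤ lam k k :=
  eigen_lower_bound_frequently_general a hpos hratio lam hlpos heig
end

section
/- Let (a_n) be a sequence of positive reals with lim_{n→∞} a_{n+1}/a_n = 0, and let J = SA + AS* be the associated Jacobi operator on ℓ²(ℕ) with positive eigenvalues λ_1 > λ_2 > ... (decreasing to 0). Then for every ε ∈ (0, 1/8) there exists n₀ such that λ_n ≤ (1 + ε)·a_{2n-1} for all n > n₀. -/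
/-!
A min-max argument. The eigenvectors of `J` for `±λ_1, …, ±λ_n` span a `2n`-dimensional space,
which therefore contains a vector `x ≠ 0` orthogonal to `e_1, …, e_{2n-1}`; on that span
`‖J x‖ ≥ λ_n ‖x‖`. On the other hand, on vectors supported in `{k ≥ 2n}` the operator `SA`
only sees the weights `a_k` with `k ≥ 2n` and `AS*` those with `k ≥ 2n - 1`. Since `a` is
eventually decreasing with `a_{2n} ≤ ε a_{2n-1}`, this gives
`‖J x‖ ≤ (a_{2n} + a_{2n-1}) ‖x‖ ≤ (1 + ε) a_{2n-1} ‖x‖`.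
-/

open Filter ContinuousLinearMap

open scoped InnerProductSpace

theorem Orthonormal.mul_norm_le_norm_apply_of_mem_span {𝕜 E ι : Type*} [RCLike 𝕜]
    [NormedAddCommGroup E] [InnerProductSpace 𝕜 E] [Fintype ι] {T : E →ₗ[𝕜] E}
    {v : ι → E} (hv : Orthonormal 𝕜 v) {μ : ι → 𝕜} (hTv : ∀ i, T (v i) = μ i • v i) {c : ℝ}
    (hc : ∀ i, c ≤ ‖μ i‖) {x : E} (hx : x ∈ Submodule.span 𝕜 (Set.range v)) :
    c * ‖x‖ ≤ ‖T x‖ := by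
  obtain ⟨d, rfl⟩ := (Submodule.mem_span_range_iff_exists_fun 𝕜).mp hx
  have norm_sq : ∀ d : ι → 𝕜, ‖∑ i, d i • v i‖ ^ 2 = ∑ i, ‖d i‖ ^ 2 := fun d => by
    simpa using hv.orthogonalFamily.norm_sum d Finset.univ
  have hT : T (∑ i, d i • v i) = ∑ i, (μ i * d i) • v i := by
    simp [hTv, smul_smul, mul_comm]
  rcases le_or_gt c 0 with hc0 | hc0
  · exact (mul_nonpos_of_nonpos_of_nonneg hc0 (norm_nonneg _)).trans (norm_nonneg _)
  refine pow_le_pow_iff_left₀ (by positivity) (norm_nonneg _) two_ne_zero |>.mp ?_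
  rw [mul_pow, hT, norm_sq, norm_sq, Finset.mul_sum]
  gcongr with i
  rw [norm_mul, mul_pow]
  gcongr
  exact hc i

namespace LinearMap.IsSymmetric

open Module End

variable {𝕜 E ι : Type*} [RCLike 𝕜] [NormedAddCommGroup E] [InnerProductSpace 𝕜 E]
  {T : E →ₗ[𝕜] E}

theorem exists_orthonormal_eigenvectors (hT : T.IsSymmetric) {μ : ι → 𝕜}
    (hμ : Function.Injective μ) (h : ∀ i, HasEigenvalue T (μ i)) :
    ∃ v : ι → E, Orthonormal 𝕜 v ∧ ∀ i, T (v i) = μ i • v i := by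
  have hunit : ∀ i, ∃ w ∈ eigenspace T (μ i), ‖w‖ = 1 := fun i => by
    obtain ⟨w, hw, hw0⟩ := (h i).exists_hasEigenvector
    exact ⟨(‖w‖⁻¹ : 𝕜) • w, Submodule.smul_mem _ _ hw, norm_smul_inv_norm hw0⟩
  choose v hv hv1 using hunit
  refine ⟨v, ⟨hv1, fun i j hij => ?_⟩, fun i => mem_eigenspace_iff.mp (hv i)⟩
  exact hT.orthogonalFamily_eigenspaces (hμ.ne hij) ⟨v i, hv i⟩ ⟨v j, hv j⟩

theorem exists_ne_zero_map_eq_zero_mul_norm_le {F : Type*} [AddCommGroup F] [Module 𝕜 F]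
    [FiniteDimensional 𝕜 F] [Fintype ι] (hT : T.IsSymmetric) {μ : ι → 𝕜}
    (hμ : Function.Injective μ) (h : ∀ i, HasEigenvalue T (μ i)) {c : ℝ}
    (hc : ∀ i, c ≤ ‖μ i‖) (φ : E →ₗ[𝕜] F) (hφ : finrank 𝕜 F < Fintype.card ι) :
    ∃ x ≠ 0, φ x = 0 ∧ c * ‖x‖ ≤ ‖T x‖ := by
  obtain ⟨v, hv, hTv⟩ := hT.exists_orthonormal_eigenvectors hμ h
  set V := Submodule.span 𝕜 (Set.range v)
  have : FiniteDimensional 𝕜 V := .span_of_finite 𝕜 (Set.finite_range v)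
  have hV : finrank 𝕜 V = Fintype.card ι := finrank_span_eq_card hv.linearIndependent
  obtain ⟨y, hy, hy0⟩ := Submodule.exists_mem_ne_zero_of_ne_bot
    ((φ ∘ₗ V.subtype).ker_ne_bot_of_finrank_lt (hV ▸ hφ))
  exact ⟨y, by simpa using hy0, hy, hv.mul_norm_le_norm_apply_of_mem_span hTv hc y.2⟩

end LinearMap.IsSymmetric

lemma exists_injective_hasEigenvalue_norm_ge {E : Type*} [AddCommGroup E] [Module ℂ E]
    {T : Module.End ℂ E} {lam : ℕ → ℝ} (hlpos : ∀ n, 0 < lam n) (hstrict : StrictAnti lam)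
    (hT : ∀ n, T.HasEigenvalue (lam n) ∧ T.HasEigenvalue (-lam n : ℝ)) (n : ℕ) :
    ∃ μ : Fin (n + 1) ⊕ Fin (n + 1) → ℂ, Function.Injective μ ∧
      (∀ i, T.HasEigenvalue (μ i)) ∧ ∀ i, lam n ≤ ‖μ i‖ := by
  have hinj : Function.Injective fun i : Fin (n + 1) => lam i :=
    hstrict.injective.comp Fin.val_injective
  refine ⟨Sum.elim (fun i => (lam i : ℂ)) (fun i => (-lam i : ℝ)),
    (Complex.ofReal_injective.comp hinj).sumElim
      (Complex.ofReal_injective.comp (neg_injective.comp hinj)) fun i j h => ?_,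
    fun i => i.rec (fun i => (hT i).1) (fun i => (hT i).2), fun i => ?_⟩
  · have := Complex.ofReal_injective h
    linarith [hlpos i, hlpos j]
  · rcases i with i | i <;>
      simpa [abs_of_pos (hlpos _)] using hstrict.antitone (Nat.lt_succ_iff.mp i.2)

lemma exists_succ_le_mul_of_tendsto_ratio {a : ℕ → ℝ} (hpos : ∀ n, 0 < a n)
    (hratio : Tendsto (fun n => a (n + 1) / a n) atTop (nhds 0)) {c : ℝ} (hc : 0 < c) :
    ∃ N, ∀ m, N ≤ m → a (m + 1) ≤ c * a m := by
  obtain ⟨N, hN⟩ := eventually_atTop.mp (hratio.eventually (ge_mem_nhds hc))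
  exact ⟨N, fun m hm => (div_le_iff₀ (hpos m)).mp (hN m hm)⟩

lemma e_apply (n k : ℕ) : e n k = if k = n then 1 else 0 := by
  simp [e, lp.single_apply, Pi.single_apply]

lemma inner_e_left (n : ℕ) (f : H2) : ⟪e n, f⟫_ℂ = f n := by
  simp [e, lp.inner_single_left]

lemma ContinuousLinearMap.ext_e {F : Type*} [NormedAddCommGroup F] [NormedSpace ℂ F]
    {T U : H2 →L[ℂ] F} (h : ∀ n, T (e n) = U (e n)) : T = U :=
  lp.ext_continuousLinearMap ENNReal.ofNat_ne_top fun n => ext_ring (h n)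

section Jacobi

variable {a : ℕ → ℝ} {S A : H2 →L[ℂ] H2}

lemma diag_apply_coord (hA : ∀ n, A (e n) = (a n : ℂ) • e n) (y : H2) (k : ℕ) :
    A y k = a k * y k := by
  have : (innerSL ℂ (e k)).comp A = (a k : ℂ) • innerSL ℂ (e k) := ext_e fun j => by
    rcases eq_or_ne k j with rfl | h <;> simp [inner_e_left, e_apply, *]
  simpa [inner_e_left] using congr($this y)

lemma adjoint_shift_apply_coord (hS : ∀ n, S (e n) = e (n + 1)) (y : H2) (k : ℕ) :
    adjoint S y k = y (k + 1) := by
  rw [← inner_e_left, adjoint_inner_right, hS, inner_e_left]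

lemma norm_shift_apply (hS : ∀ n, S (e n) = e (n + 1)) (y : H2) : ‖S y‖ = ‖y‖ := by
  refine (norm_map_iff_adjoint_comp_self S).mpr (ext_e fun n => lp.ext <| funext fun k => ?_) y
  simp [adjoint_shift_apply_coord hS, hS, e_apply]

lemma norm_adjoint_shift_apply_le (hS : ∀ n, S (e n) = e (n + 1)) (x : H2) :
    ‖adjoint S x‖ ≤ ‖x‖ := by
  refine (le_opNorm _ _).trans (mul_le_of_le_one_left (norm_nonneg _) ?_)
  rw [LinearIsometryEquiv.norm_map]
  exact opNorm_le_bound _ zero_le_one fun y => by rw [norm_shift_apply hS, one_mul]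

lemma isSelfAdjoint_diag (hA : ∀ n, A (e n) = (a n : ℂ) • e n) : IsSelfAdjoint A := by
  refine ext_e fun n => lp.ext <| funext fun k => ?_
  rw [star_eq_adjoint, ← inner_e_left, adjoint_inner_right, hA, hA, inner_smul_left,
    inner_e_left, lp.coeFn_smul, Pi.smul_apply, e_apply]
  split_ifs with h <;> simp [h]

lemma isSelfAdjoint_jacobi (hA : ∀ n, A (e n) = (a n : ℂ) • e n) :
    IsSelfAdjoint (S ∘L A + A ∘L adjoint S) := by
  rw [IsSelfAdjoint, star_add, ← mul_def, ← mul_def, ← star_eq_adjoint, star_mul, star_mul,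
    star_star, (isSelfAdjoint_diag hA).star_eq, add_comm]

lemma norm_diag_apply_le (hA : ∀ n, A (e n) = (a n : ℂ) • e n) {m : ℕ} {x : H2}
    (hx : ∀ k < m, x k = 0) {b : ℝ} (hb : ∀ k, m ≤ k → |a k| ≤ b) : ‖A x‖ ≤ b * ‖x‖ := by
  have hb0 : 0 ≤ b := (abs_nonneg _).trans (hb m le_rfl)
  calc ‖A x‖ ≤ ‖(b : ℂ) • x‖ := lp.norm_mono two_ne_zero fun k => by
        rw [diag_apply_coord hA, lp.coeFn_smul, Pi.smul_apply, smul_eq_mul, norm_mul, norm_mul,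
          Complex.norm_real, Complex.norm_real, Real.norm_eq_abs, Real.norm_of_nonneg hb0]
        rcases lt_or_ge k m with hk | hk
        · simp [hx k hk]
        · gcongr
          exact hb k hk
    _ = b * ‖x‖ := by rw [norm_smul, Complex.norm_real, Real.norm_of_nonneg hb0]

lemma norm_jacobi_apply_le (hS : ∀ n, S (e n) = e (n + 1))
    (hA : ∀ n, A (e n) = (a n : ℂ) • e n) {m : ℕ} {x : H2} (hx : ∀ k ≤ m, x k = 0)
    {b₀ b₁ : ℝ} (hb₀ : ∀ k, m ≤ k → |a k| ≤ b₀) (hb₁ : ∀ k, m < k → |a k| ≤ b₁) :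
    ‖(S ∘L A + A ∘L adjoint S) x‖ ≤ (b₁ + b₀) * ‖x‖ := by
  have hb₀0 : 0 ≤ b₀ := (abs_nonneg _).trans (hb₀ m le_rfl)
  have hSx : ∀ k < m, adjoint S x k = 0 := fun k hk => by
    rw [adjoint_shift_apply_coord hS]
    exact hx _ hk
  calc ‖S (A x) + A (adjoint S x)‖ ≤ ‖A x‖ + ‖A (adjoint S x)‖ := by
        rw [← norm_shift_apply hS (A x)]
        exact norm_add_le _ _
    _ ≤ b₁ * ‖x‖ + b₀ * ‖adjoint S x‖ :=
        add_le_add (norm_diag_apply_le hA (fun k hk => hx k (by omega)) hb₁)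
          (norm_diag_apply_le hA hSx hb₀)
    _ ≤ (b₁ + b₀) * ‖x‖ := by
        have := mul_le_mul_of_nonneg_left (norm_adjoint_shift_apply_le hS x) hb₀0
        linarith

end Jacobi

/-- Indices are 0-based: `lam n` is the paper's λ_{n+1} and `a (2 * n)` its a_{2(n+1)-1}. -/
theorem jacobi_eigenvalue_upper_bound_general (a : ℕ → ℝ) (hpos : ∀ n, 0 < a n)
    (hratio : Tendsto (fun n => a (n + 1) / a n) atTop (nhds 0))
    (S A : H2 →L[ℂ] H2)
    (hS : ∀ n, S (e n) = e (n + 1))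
    (hA : ∀ n, A (e n) = (a n : ℂ) • e n)
    (lam : ℕ → ℝ) (hlpos : ∀ n, 0 < lam n) (hstrict : StrictAnti lam)
    (hchar : ∀ μ : ℂ,
      Module.End.HasEigenvalue ((S ∘L A + A ∘L adjoint S : H2 →L[ℂ] H2) : H2 →ₗ[ℂ] H2) μ ↔
      ∃ n, μ = lam n ∨ μ = -lam n) :
    ∀ ε : ℝ, 0 < ε → ε < 1 / 8 →
      ∃ n₀ : ℕ, ∀ n, n₀ < n → lam n ≤ (1 + ε) * a (2 * n) := by
  intro ε hε _
  obtain ⟨N, hN⟩ := exists_succ_le_mul_of_tendsto_ratio hpos hratio (lt_min hε one_pos)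
  have ha_anti : AntitoneOn a {m | N ≤ m} := antitoneOn_nat_Ici_of_succ_le fun m hm =>
    (hN m hm).trans (mul_le_of_le_one_left (hpos m).le (min_le_right _ _))
  have ha_tail : ∀ m, N ≤ m → ∀ k, m ≤ k → |a k| ≤ a m := fun m hm k hk => by
    rw [abs_of_pos (hpos k)]
    exact ha_anti hm (hm.trans hk) hk
  refine ⟨N, fun n hn => ?_⟩
  obtain ⟨μ, hμ, hμ_eig, hμ_ge⟩ := exists_injective_hasEigenvalue_norm_ge hlpos hstrict
    (fun k => ⟨(hchar _).mpr ⟨k, .inl rfl⟩, (hchar _).mpr ⟨k, .inr (by push_cast; rfl)⟩⟩) n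
  obtain ⟨x, hx0, hx, hlow⟩ :=
    (isSelfAdjoint_jacobi hA).isSymmetric.exists_ne_zero_map_eq_zero_mul_norm_le hμ hμ_eig
      hμ_ge (LinearMap.pi fun k : Fin (2 * n + 1) => (innerSL ℂ (e k)).toLinearMap) (by
        simp only [Module.finrank_fintype_fun_eq_card, Fintype.card_fin, Fintype.card_sum]
        omega)
  have hx_head : ∀ k ≤ 2 * n, x k = 0 := fun k hk => by
    simpa [inner_e_left] using congr_fun hx ⟨k, by omega⟩
  have hup := norm_jacobi_apply_le hS hA hx_head (ha_tail _ (by omega)) (ha_tail _ (by omega))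
  have hsmall : a (2 * n + 1) ≤ ε * a (2 * n) :=
    (hN _ (by omega)).trans (by gcongr; exacts [(hpos _).le, min_le_left _ _])
  refine le_of_mul_le_mul_right ((hlow.trans hup).trans ?_) (norm_pos_iff.mpr hx0)
  gcongr
  linarith

/-- Upper bound (inequality (2.5)): for every ε ∈ (0, 1/8) there is n₀ such that
the positive eigenvalues of the Jacobi operator J = SA + AS* satisfy
λ_n ≤ (1 + ε)·a_{2n-1} for all n > n₀ (0-indexed: lam n is the paper's λ_{n+1}
and a (2n) the paper's a_{2(n+1)-1}). -/
theorem jacobi_eigenvalue_upper_bound (a : ℕ → ℝ) (hpos : ∀ n, 0 < a n)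
    (hratio : Tendsto (fun n => a (n + 1) / a n) atTop (nhds 0))
    (S A : H2 →L[ℂ] H2)
    (hS : ∀ n, S (e n) = e (n + 1))
    (hA : ∀ n, A (e n) = (a n : ℂ) • e n)
    (lam : ℕ → ℝ) (hlpos : ∀ n, 0 < lam n) (hstrict : StrictAnti lam)
    (htend : Tendsto lam atTop (nhds 0))
    (hchar : ∀ μ : ℂ,
      Module.End.HasEigenvalue ((S ∘L A + A ∘L adjoint S : H2 →L[ℂ] H2) : H2 →ₗ[ℂ] H2) μ ↔
      ∃ n, μ = lam n ∨ μ = -lam n) :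
    ∀ ε : ℝ, 0 < ε → ε < 1 / 8 →
      ∃ n₀ : ℕ, ∀ n, n₀ < n → lam n ≤ (1 + ε) * a (2 * n) :=
  jacobi_eigenvalue_upper_bound_general a hpos hratio S A hS hA lam hlpos hstrict hchar
end
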